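/- arXiv:1608.06462 — 6 statements merged into one kernel-verified Lean document; each statement's English description precedes it below -/
import Mathlib

section
/- Let G be a flow graph with start vertex s and dominator tree D. If v is an ancestor of u in D (i.e., v dominates u), then every simple path in G from v to u contains only vertices that are descendants of v in D (i.e., vertices dominated by v). -/
open scoped Classical

namespace Dominators

variable {V : Type*}

/-- A walk in a digraph `E` from `u` to `w`, recorded as the list of its vertices. -/
inductive Walk (E : V → V → Prop) : V → V → List V → Prop
  | nil (v : V) : Walk E v v [v]
  | cons {u v w : V} {p : List V} (h : E u v) (hw : Walk E v w p) : Walk E u w (u :: p)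

/-- `v` is reachable from `s` in the flow graph `(E, s)`. -/
def Reachable (E : V → V → Prop) (s v : V) : Prop := ∃ p, Walk E s v p

/-- `v` dominates `w` in the flow graph `(E, s)`: every walk from `s` to `w` contains `v`.
In the dominator tree `D`, `v` is an ancestor of `w` iff `v` dominates `w`. -/
def Dom (E : V → V → Prop) (s v w : V) : Prop := ∀ p, Walk E s w p → v ∈ p

/-- `v` is the immediate dominator of `w` (the parent of `w` in the dominator tree):
a proper dominator of `w` that is dominated by every proper dominator of `w`. -/
def IsIdom (E : V → V → Prop) (s v w : V) : Prop :=
  v ≠ w ∧ Dom E s v w ∧ ∀ u, u ≠ w → Dom E s u w → Dom E s u v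

/-- `z` is the nearest common ancestor of `x` and `y` in the dominator tree of `(E, s)`. -/
def IsNca (E : V → V → Prop) (s z x y : V) : Prop :=
  Dom E s z x ∧ Dom E s z y ∧ ∀ u, Dom E s u x → Dom E s u y → Dom E s u z

/-- The graph obtained from `E` by inserting the edge `(x, y)`. -/
def Ins (E : V → V → Prop) (x y : V) : V → V → Prop := fun a b => E a b ∨ (a = x ∧ b = y)

/-- `v` is affected by the insertion of edge `(x, y)`: its immediate dominator
(parent in the dominator tree) changes. -/
def Affected (E : V → V → Prop) (s x y v : V) : Prop :=
  ∃ a b, IsIdom E s a v ∧ IsIdom (Ins E x y) s b v ∧ a ≠ b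

/-- `depth` is a depth function for the dominator tree of `(E, s)`. -/
def IsDepth (E : V → V → Prop) (s : V) (depth : V → ℕ) : Prop :=
  depth s = 0 ∧ ∀ v u, Reachable E s v → v ≠ s → IsIdom E s u v → depth v = depth u + 1

/-- `δ` is a preorder of the dominator tree of `(E, s)`: it is injective on reachable
vertices, every vertex precedes (or equals) its descendants, and the descendants of every
vertex are consecutive. -/
def IsPreorderOfD (E : V → V → Prop) (s : V) (δ : V → ℕ) : Prop :=
  (∀ u v, Reachable E s u → Reachable E s v → u ≠ v → δ u ≠ δ v) ∧
  (∀ v u, Reachable E s u → Dom E s v u → δ v ≤ δ u) ∧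
  (∀ v a b, Reachable E s b → Dom E s v a → δ v ≤ δ b → δ b ≤ δ a → Dom E s v b)

/-- `δ` is a low-high order for the vertex `v` in `(E, s)`: either the edge from the
parent `d(v)` of `v` in the dominator tree is in `E`, or `v` has two entering edges
`(u, v)` and `(w, v)` with `u`, `w` reachable, `u <_δ v <_δ w`, and `w` not a
descendant of `v` in the dominator tree. -/
def LowHighFor (E : V → V → Prop) (s : V) (δ : V → ℕ) (v : V) : Prop :=
  (∃ q, IsIdom E s q v ∧ E q v) ∨
  ∃ u w, E u v ∧ E w v ∧ Reachable E s u ∧ Reachable E s w ∧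
    δ u < δ v ∧ δ v < δ w ∧ ¬ Dom E s v w

/-- `δ` is a low-high order of the flow graph `(E, s)`. -/
def IsLowHigh (E : V → V → Prop) (s : V) (δ : V → ℕ) : Prop :=
  IsPreorderOfD E s δ ∧ ∀ v, Reachable E s v → v ≠ s → LowHighFor E s δ v

/-- The edge relation of the spanning tree with parent function `par`, rooted at `s`,
on the vertices reachable in `(E, s)`. -/
def TreeRel (E : V → V → Prop) (s : V) (par : V → V) : V → V → Prop :=
  fun a b => Reachable E s b ∧ b ≠ s ∧ par b = a

/-- `par` is (the parent function of) a spanning tree of the flow graph `(E, s)`. -/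
def IsSpanningTree (E : V → V → Prop) (s : V) (par : V → V) : Prop :=
  (∀ v, Reachable E s v → v ≠ s → E (par v) v) ∧
  (∀ v, Reachable E s v → ∃ p, Walk (TreeRel E s par) s v p)

/-- The spanning trees with parent functions `b` and `r` are divergent: for every
reachable `v`, the tree paths from `s` to `v` share only the dominators of `v`. -/
def Divergent (E : V → V → Prop) (s : V) (b r : V → V) : Prop :=
  ∀ v p q, Reachable E s v → Walk (TreeRel E s b) s v p → Walk (TreeRel E s r) s v q →
    ∀ u, u ∈ p → u ∈ q → Dom E s u v

/-! Let `w` lie on a simple path `p` from `v` to `u`. Any walk from `s` to `w`, continued along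
`p` from `w` on, is a walk from `s` to `u` and so passes through `v`; since `p` is simple, `v` does
not occur on `p` after `w`, hence it lies on the walk to `w`. -/

theorem Walk.exists_eq_cons {E : V → V → Prop} {a b : V} {p : List V} (hp : Walk E a b p) :
    ∃ t, p = a :: t := by
  cases hp with
  | nil => exact ⟨[], rfl⟩
  | cons => exact ⟨_, rfl⟩

theorem Walk.append {E : V → V → Prop} {a b c : V} {p q : List V}
    (hp : Walk E a b p) (hq : Walk E b c (b :: q)) : Walk E a c (p ++ q) := by
  induction hp with
  | nil => exact hq
  | cons h _ ih => exact .cons h (ih hq)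

theorem Dom.of_mem_walk {E : V → V → Prop} {s v x u : V} {p : List V}
    (hdom : Dom E s v u) (hp : Walk E x u p) (hv : v ∉ p.tail) : ∀ w ∈ p, Dom E s v w := by
  induction hp with
  | nil =>
    intro w hw
    rwa [List.mem_singleton.mp hw]
  | cons h hrest ih =>
    intro w hw
    rcases List.mem_cons.mp hw with rfl | hw
    · exact fun q hq => (List.mem_append.mp (hdom _ (hq.append (.cons h hrest)))).resolve_right hv
    · exact ih hdom (fun hv' => hv (List.tail_subset _ hv')) w hw

theorem stmt0_general (E : V → V → Prop) (s v u : V)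
    (hdom : Dom E s v u) :
    ∀ p, Walk E v u p → p.Nodup → ∀ w ∈ p, Dom E s v w := by
  intro p hp hnd
  obtain ⟨t, rfl⟩ := hp.exists_eq_cons
  exact Dom.of_mem_walk hdom hp (List.nodup_cons.mp hnd).1

/-- If `v` is an ancestor of `u` in the dominator tree (i.e. `v` dominates
`u`), then every simple path in `G` from `v` to `u` contains only vertices dominated
by `v`. -/
theorem stmt0 (E : V → V → Prop) (s v u : V)
    (hu : Reachable E s u) (hdom : Dom E s v u) :
    ∀ p, Walk E v u p → p.Nodup → ∀ w ∈ p, Dom E s v w :=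
  stmt0_general E s v u hdom

end Dominators
end

section
/- Let G be a flow graph with start vertex s and dominator tree D. Let v be an ancestor of w in D, and let u be a vertex that is not a descendant of v in D. Then every path in G from u to w contains v. -/
open scoped Classical

namespace Dominators

variable {V : Type*}

theorem Walk.exists_subset_append {E : V → V → Prop} {a b c : V} {p q : List V}
    (hp : Walk E a b p) (hq : Walk E b c q) : ∃ r, Walk E a c r ∧ r ⊆ p ++ q := by
  induction hp with
  | nil => exact ⟨q, hq, List.subset_append_right _ _⟩
  | cons h _ ih =>
    obtain ⟨r, hr, hsub⟩ := ih hq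
    exact ⟨_, Walk.cons h hr, List.cons_subset_cons _ hsub⟩

theorem Dom.of_walk_not_mem {E : V → V → Prop} {s v w u : V} {p : List V}
    (hvw : Dom E s v w) (hp : Walk E u w p) (hvp : v ∉ p) : Dom E s v u := by
  intro q hq
  obtain ⟨r, hr, hsub⟩ := hq.exists_subset_append hp
  exact (List.mem_append.mp (hsub (hvw r hr))).resolve_right hvp

theorem stmt1_general (E : V → V → Prop) (s v w u : V)
    (hvw : Dom E s v w) (hnd : ¬ Dom E s v u) :
    ∀ p, Walk E u w p → v ∈ p :=
  fun _ hp => by_contra fun hvp => hnd (hvw.of_walk_not_mem hp hvp)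

/-- If `v` is an ancestor of `w` in the dominator tree (i.e. `v` dominates
`w`), and `u` is not a descendant of `v` (i.e. `v` does not dominate `u`), then every
path in `G` from `u` to `w` contains `v`. -/
theorem stmt1 (E : V → V → Prop) (s v w u : V)
    (hw : Reachable E s w) (hu : Reachable E s u)
    (hvw : Dom E s v w) (hnd : ¬ Dom E s v u) :
    ∀ p, Walk E u w p → v ∈ p :=
  stmt1_general E s v w u hvw hnd

end Dominators
end

section
/- Let G be a flow graph with start vertex s and dominator tree D, and let (x,y) be an inserted edge with x and y reachable. Then all vertices affected by the insertion of (x,y) are descendants in D of a single common child c of nca(x,y); specifically, c is the child of nca(x,y) that is an ancestor of y in D. -/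
/-!
Let `a` be the old parent of an affected reachable vertex `v`. If `a` still dominated `v`
after the insertion, the old and the new parent would dominate each other; so some new walk
to `v` avoids `a`. That walk uses `(x, y)`, hence `a` does not dominate `x` but dominates `y`.
As `z` dominates `x`, `a` does not dominate `z`; comparing `a` with `c`, both dominators of `y`,
`a` must lie below `c`, and so does `v`.
-/

open scoped Classical

namespace Dominators

variable {V : Type*}

section Walks

variable {E F : V → V → Prop} {u v w t : V} {p q : List V}

theorem Walk.end_mem (h : Walk E u w p) : w ∈ p := by
  induction h with
  | nil => exact List.mem_singleton_self _
  | cons _ _ ih => exact List.mem_cons_of_mem _ ih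

theorem Walk.getLast?_eq (h : Walk E u w p) : p.getLast? = some w := by
  induction h with
  | nil => rfl
  | cons _ hw ih =>
    cases hw with
    | nil => rfl
    | cons => simpa [List.getLast?_cons_cons] using ih

theorem Walk.mono (hEF : ∀ a b, E a b → F a b) (h : Walk E u w p) : Walk F u w p := by
  induction h with
  | nil => exact Walk.nil _
  | cons hE _ ih => exact Walk.cons (hEF _ _ hE) ih

theorem Walk.append_s3 (h₁ : Walk E u v p) (h₂ : Walk E v w q) : Walk E u w (p ++ q.tail) := by
  induction h₁ with
  | nil =>
    cases h₂ with
    | nil => exact Walk.nil _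
    | cons hE hw => exact Walk.cons hE hw
  | cons hE _ ih => exact Walk.cons hE (ih h₂)

theorem Walk.exists_prefix (h : Walk E u w p) (hv : v ∈ p) : ∃ q, Walk E u v q ∧ q <+: p := by
  induction h with
  | nil => exact ⟨_, List.mem_singleton.mp hv ▸ Walk.nil _, List.prefix_rfl⟩
  | @cons a b w p hE _ ih =>
    rcases List.mem_cons.mp hv with rfl | hv
    · exact ⟨[v], Walk.nil v, by simp⟩
    · obtain ⟨q, hq, hqp⟩ := ih hv
      exact ⟨a :: q, Walk.cons hE hq, List.cons_prefix_cons.mpr ⟨rfl, hqp⟩⟩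

theorem Walk.exists_suffix_from_last {S : V → Prop} (h : Walk E u t p) (hS : ∃ v ∈ p, S v) :
    ∃ w, S w ∧ ∃ q, Walk E w t q ∧ q ⊆ p ∧ ∀ r ∈ q, S r → r = w := by
  induction h with
  | nil v =>
    obtain ⟨_, hv, hSv⟩ := hS
    obtain rfl := List.mem_singleton.mp hv
    exact ⟨_, hSv, _, Walk.nil _, List.Subset.refl _, fun r hr _ => List.mem_singleton.mp hr⟩
  | @cons a b t p hE hw ih =>
    by_cases hp : ∃ v ∈ p, S v
    · obtain ⟨w, hSw, q, hq, hqp, hlast⟩ := ih hp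
      exact ⟨w, hSw, q, hq, List.Subset.trans hqp (List.subset_cons_self _ _), hlast⟩
    · have hSa : S a := by
        obtain ⟨v, hv, hSv⟩ := hS
        rcases List.mem_cons.mp hv with rfl | hv
        · exact hSv
        · exact absurd ⟨v, hv, hSv⟩ hp
      refine ⟨a, hSa, _, Walk.cons hE hw, List.Subset.refl _, fun r hr hSr => ?_⟩
      rcases List.mem_cons.mp hr with rfl | hr
      · rfl
      · exact absurd ⟨r, hr, hSr⟩ hp

theorem Walk.ins_cases {x y : V} (h : Walk (Ins E x y) u w p) :
    (∃ q, Walk E u w q ∧ q ⊆ p) ∨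
      (∃ q, Walk E u x q ∧ q ⊆ p) ∧ (∃ q, Walk E y w q ∧ q ⊆ p) := by
  induction h with
  | nil v => exact Or.inl ⟨[v], Walk.nil v, List.Subset.refl _⟩
  | @cons a b w p hE _ ih =>
    have hsub : p ⊆ a :: p := List.subset_cons_self _ _
    rcases hE with hE | ⟨rfl, rfl⟩
    · rcases ih with ⟨q, hq, hqp⟩ | ⟨⟨q₁, hq₁, hq₁p⟩, hy⟩
      · exact Or.inl ⟨a :: q, Walk.cons hE hq, List.cons_subset_cons _ hqp⟩
      · refine Or.inr ⟨⟨a :: q₁, Walk.cons hE hq₁, List.cons_subset_cons _ hq₁p⟩, ?_⟩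
        obtain ⟨q₂, hq₂, hq₂p⟩ := hy
        exact ⟨q₂, hq₂, List.Subset.trans hq₂p hsub⟩
    · refine Or.inr ⟨⟨[a], Walk.nil a, by simp⟩, ?_⟩
      rcases ih with ⟨q, hq, hqp⟩ | ⟨-, q₂, hq₂, hq₂p⟩
      · exact ⟨q, hq, List.Subset.trans hqp hsub⟩
      · exact ⟨q₂, hq₂, List.Subset.trans hq₂p hsub⟩

end Walks

section Domination

variable {E : V → V → Prop} {s a b u w t x y : V}

theorem Dom.refl (v : V) : Dom E s v v := fun _ hp => hp.end_mem

theorem Dom.trans (h₁ : Dom E s u w) (h₂ : Dom E s w t) : Dom E s u t := by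
  intro p hp
  obtain ⟨q, hq, hqp⟩ := hp.exists_prefix (h₂ p hp)
  exact hqp.subset (h₁ q hq)

theorem Dom.reachable (h : Dom E s u w) (hw : Reachable E s w) : Reachable E s u := by
  obtain ⟨p, hp⟩ := hw
  obtain ⟨q, hq, -⟩ := hp.exists_prefix (h p hp)
  exact ⟨q, hq⟩

theorem Dom.of_ins (h : Dom (Ins E x y) s u w) : Dom E s u w :=
  fun p hp => h p (hp.mono fun _ _ => Or.inl)

/-- On a shortest walk `p` to `b`, the prefixes ending at `a` and then at `b` must be all of
`p`, so `a` and `b` are both its last vertex. -/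
theorem Dom.antisymm (hab : Dom E s a b) (hba : Dom E s b a) (hb : Reachable E s b) : a = b := by
  have hex : ∃ n, ∃ p, Walk E s b p ∧ p.length = n := by
    obtain ⟨p, hp⟩ := hb
    exact ⟨_, p, hp, rfl⟩
  obtain ⟨p, hp, hlen⟩ := Nat.find_spec hex
  obtain ⟨q, hq, hqp⟩ := hp.exists_prefix (hab p hp)
  obtain ⟨r, hr, hrq⟩ := hq.exists_prefix (hba q hq)
  have hmin : p.length ≤ r.length := hlen ▸ Nat.find_min' hex ⟨r, hr, rfl⟩
  have hqp_eq : q = p := hqp.eq_of_length (le_antisymm hqp.length_le (hmin.trans hrq.length_le))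
  simpa [hqp_eq, hp.getLast?_eq, eq_comm] using hq.getLast?_eq

/-- After the last of `u`, `w` on a walk to `t`, the walk avoids both; prefixing that suffix
with a walk to it that avoids the other vertex gives a walk to `t` avoiding that vertex. -/
theorem Dom.total (hu : Dom E s u t) (hw : Dom E s w t) (ht : Reachable E s t) :
    Dom E s u w ∨ Dom E s w u := by
  by_contra! ⟨huw, hwu⟩
  obtain ⟨A, hA, huA⟩ : ∃ A, Walk E s w A ∧ u ∉ A := by simpa [Dom] using huw
  obtain ⟨B, hB, hwB⟩ : ∃ B, Walk E s u B ∧ w ∉ B := by simpa [Dom] using hwu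
  obtain ⟨P, hP⟩ := ht
  obtain ⟨m, hm, Q, hQ, -, hlast⟩ :=
    hP.exists_suffix_from_last (S := fun r => r = u ∨ r = w) ⟨u, hu P hP, Or.inl rfl⟩
  rcases hm with rfl | rfl
  · rcases List.mem_append.mp (hw _ (hB.append_s3 hQ)) with h | h
    · exact hwB h
    · exact hwB (hlast w (List.mem_of_mem_tail h) (Or.inr rfl) ▸ hB.end_mem)
  · rcases List.mem_append.mp (hu _ (hA.append_s3 hQ)) with h | h
    · exact huA h
    · exact huA (hlast u (List.mem_of_mem_tail h) (Or.inl rfl) ▸ hA.end_mem)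

theorem Dom.not_dom_and_dom_of_not_dom_ins {v : V} (ha : Dom E s a v)
    (hlost : ¬ Dom (Ins E x y) s a v) : ¬ Dom E s a x ∧ Dom E s a y := by
  obtain ⟨p, hp, hap⟩ : ∃ p, Walk (Ins E x y) s v p ∧ a ∉ p := by simpa [Dom] using hlost
  rcases hp.ins_cases with ⟨q, hq, hqp⟩ | ⟨⟨q₁, hq₁, hq₁p⟩, q₂, hq₂, hq₂p⟩
  · exact absurd (hqp (ha q hq)) hap
  refine ⟨fun hax => hap (hq₁p (hax q₁ hq₁)), fun r hr => ?_⟩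
  rcases List.mem_append.mp (ha _ (hr.append_s3 hq₂)) with h | h
  · exact h
  · exact absurd (hq₂p (List.mem_of_mem_tail h)) hap

/-- If the old parent still dominated `v`, the old and the new parent would dominate each other. -/
theorem Affected.exists_isIdom_not_dom_ins {v : V} (hv : Affected E s x y v)
    (hr : Reachable E s v) : ∃ a, IsIdom E s a v ∧ ¬ Dom (Ins E x y) s a v := by
  obtain ⟨a, b, ha, hb, hab⟩ := hv
  refine ⟨a, ha, fun hanew => hab ?_⟩
  have hbv : Dom E s b v := hb.2.1.of_ins
  exact (hb.2.2 a ha.1 hanew).of_ins.antisymm (ha.2.2 b hb.1 hbv) (hbv.reachable hr)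

theorem IsIdom.dom_of_dom_of_not_dom {z c : V} (hzc : IsIdom E s z c) (hcy : Dom E s c y)
    (hy : Reachable E s y) (hay : Dom E s a y) (haz : ¬ Dom E s a z) : Dom E s c a := by
  rcases Dom.total hay hcy hy with hac | hca
  · by_cases h : a = c
    · exact h ▸ Dom.refl a
    · exact absurd (hzc.2.2 a h hac) haz
  · exact hca

end Domination

theorem stmt3_general (E : V → V → Prop) (s x y z c : V)
    (hy : Reachable E s y)
    (hz : IsNca E s z x y)
    (hczc : IsIdom E s z c) (hcy : Dom E s c y) :
    ∀ v, Affected E s x y v → Dom E s c v := by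
  intro v hv
  by_cases hr : Reachable E s v
  · obtain ⟨a, ha, hlost⟩ := hv.exists_isIdom_not_dom_ins hr
    obtain ⟨hax, hay⟩ := ha.2.1.not_dom_and_dom_of_not_dom_ins hlost
    have haz : ¬ Dom E s a z := fun haz => hax (haz.trans hz.1)
    exact (hczc.dom_of_dom_of_not_dom hcy hy hay haz).trans ha.2.1
  · exact fun p hp => absurd ⟨p, hp⟩ hr

/-- All vertices affected by the insertion of edge `(x,y)` are descendants
in the dominator tree of the common child `c` of `nca(x,y)`; `c` is the child of
`nca(x,y)` that is an ancestor of `y`. -/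
theorem stmt3 (E : V → V → Prop) (s x y z c : V)
    (hx : Reachable E s x) (hy : Reachable E s y)
    (hz : IsNca E s z x y)
    (hczc : IsIdom E s z c) (hcy : Dom E s c y) :
    ∀ v, Affected E s x y v → Dom E s c v :=
  stmt3_general E s x y z c hy hz hczc hcy

end Dominators
end

section
/- Let G_A be a flow graph with flat dominator tree rooted at z, containing distinguished vertices α* and β* with in-edges only from z, and equipped with divergent spanning trees B_A, R_A satisfying the invariants of AuxiliaryLowHigh. Then algorithm AuxiliaryLowHigh computes a low-high order ζ of G_A such that α* is first and β* is last among the non-root vertices, i.e., α* <_ζ v <_ζ β* for all v ∈ V_A \ {z, α*, β*}. -/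
open scoped Classical

namespace Dominators

variable {V : Type*}

/-- The invariants of algorithm `AuxiliaryLowHigh` for the flow graph `(EA, z)` with
spanning trees given by parent functions `b` and `r`:
(i) the dominator tree of `(EA, z)` is flat;
(ii) `b` and `r` are divergent spanning trees of `(EA, z)` rooted at `z`;
(iii) for every vertex `v ≠ z`, either `b v = r v = z` or `b v`, `r v`, `z` are
pairwise distinct. -/
def AuxInv (EA : V → V → Prop) (z : V) (b r : V → V) : Prop :=
  (∀ v, Reachable EA z v → v ≠ z → ∀ u, Dom EA z u v → u = z ∨ u = v) ∧
  (IsSpanningTree EA z b ∧ IsSpanningTree EA z r ∧ Divergent EA z b r) ∧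
  (∀ v, Reachable EA z v → v ≠ z →
    (b v = z ∧ r v = z) ∨ (b v ≠ z ∧ r v ≠ z ∧ b v ≠ r v))

/-!
The order is built as `AuxiliaryLowHigh` builds it, by induction on the number of non-root
vertices. If some vertex has non-root parents, take one of maximal depth in `b`: it is a leaf
of `b`. Delete it and reattach its `r`-children to its `r`-parent; divergence keeps the two
parents of every remaining vertex distinct, so the invariants survive. Order the rest and put
the deleted vertex immediately next to its `r`-parent, on the side of its `b`-parent. Then it lies
between its parents, and a former `r`-child, which lay between its `b`-parent and the new
`r`-parent, still lies between its `b`-parent and the reinserted vertex, as nothing was placed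
in between. A vertex whose parents are both the root only has to lie between `α` and `β`.
Working in `ℚ` leaves room for every reinsertion; the order is turned into ranks at the end.
-/

open Function Set Relation OrderDual

/-- `ReflTransGen (ParentStep f z) u x`: `x` is an ancestor of `u` in the tree with parent
function `f` and root `z` (the root has no parent, whatever `f z` is). -/
def ParentStep (f : V → V) (z a c : V) : Prop := a ≠ z ∧ f a = c

/-- The parent function after deleting `v`. -/
noncomputable def bypass (f : V → V) (v : V) : V → V := fun u => if f u = v then f v else f u

lemma reflTransGen_parentStep_of_bypass {f : V → V} {z v u x : V} (hvz : v ≠ z)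
    (h : ReflTransGen (ParentStep (bypass f v) z) u x) : ReflTransGen (ParentStep f z) u x := by
  refine reflTransGen_closed (fun a c (hac : ParentStep _ z a c) => ?_) u x h
  obtain ⟨ha, hac⟩ := hac
  unfold bypass at hac
  split_ifs at hac with hfa
  · exact (ReflTransGen.single ⟨ha, hfa⟩).tail ⟨hvz, hac⟩
  · exact .single ⟨ha, hac⟩

lemma exists_depth_of_forall_exists_iterate {f : V → V} {z : V} (h : ∀ u, ∃ n, f^[n] u = z) :
    ∃ d : V → ℕ, ∀ u, u ≠ z → d (f u) < d u := by
  refine ⟨fun u => Nat.find (h u), fun u hu => ?_⟩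
  obtain ⟨n, hn⟩ := Nat.exists_eq_succ_of_ne_zero fun (h0 : Nat.find (h u) = 0) => hu <| by
    have := Nat.find_spec (h u)
    rwa [h0] at this
  have hfu : f^[n] (f u) = z := by
    rw [← iterate_succ_apply, ← hn]
    exact Nat.find_spec (h u)
  simp only [hn]
  exact Nat.lt_succ_of_le (Nat.find_min' _ hfu)

lemma Walk.exists_iterate_eq {E : V → V → Prop} {s : V} {par : V → V} {a u : V} {p : List V}
    (h : Walk (TreeRel E s par) a u p) : ∃ n, par^[n] u = a := by
  induction h with
  | nil v => exact ⟨0, rfl⟩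
  | cons hav _ ih =>
    obtain ⟨n, hn⟩ := ih
    exact ⟨n + 1, by rw [iterate_succ_apply', hn, hav.2.2]⟩

lemma IsSpanningTree.exists_depth {E : V → V → Prop} {s : V} {par : V → V}
    (hall : ∀ v, Reachable E s v) (h : IsSpanningTree E s par) :
    ∃ d : V → ℕ, ∀ u, u ≠ s → d (par u) < d u :=
  exists_depth_of_forall_exists_iterate fun u =>
    (h.2 u (hall u)).elim fun _ hp => hp.exists_iterate_eq

lemma Walk.mem_or_transGen_of_reflTransGen {E : V → V → Prop} {s : V} {par : V → V}
    {a u x : V} {p : List V} (h : Walk (TreeRel E s par) a u p)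
    (hx : ReflTransGen (ParentStep par s) u x) : x ∈ p ∨ TransGen (ParentStep par s) a x := by
  induction h with
  | nil v => simpa [eq_comm] using reflTransGen_iff_eq_or_transGen.1 hx
  | cons hav _ ih =>
    rcases ih hx with hxp | hvx
    · exact .inl (List.mem_cons_of_mem _ hxp)
    obtain ⟨c, ⟨-, rfl⟩, hcx⟩ := TransGen.head'_iff.1 hvx
    rw [hav.2.2] at hcx
    rcases reflTransGen_iff_eq_or_transGen.1 hcx with rfl | hax
    · exact .inl List.mem_cons_self
    · exact .inr hax

lemma Walk.mem_of_reflTransGen {E : V → V → Prop} {s : V} {par : V → V} {u x : V}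
    {p : List V} (h : Walk (TreeRel E s par) s u p)
    (hx : ReflTransGen (ParentStep par s) u x) : x ∈ p :=
  (h.mem_or_transGen_of_reflTransGen hx).resolve_right fun hsx =>
    (TransGen.head'_iff.1 hsx).elim fun _ hc => hc.1.1 rfl

section Order

variable {α : Type*} [LinearOrder α]

lemma mem_uIoo_of_notMem_uIoo {e g c x : α} (he : e ∈ uIoo g c) (hex : e ∉ uIoo c x)
    (hne : e ≠ x) : e ∈ uIoo g x := by
  simp only [uIoo_eq_union, mem_union, mem_Ioo] at *
  grind

variable [DenselyOrdered α]

lemma exists_mem_Ioo_forall_notMem_Ioc (A : Finset α) {c d : α} (h : c < d) :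
    ∃ x ∈ Ioo c d, ∀ y ∈ A, y ∉ Ioc c x := by
  obtain ⟨m, hm, hmin⟩ := (insert d (A.filter (c < ·))).exists_min_image id (by simp)
  have hcm : c < m := by
    simp only [Finset.mem_insert, Finset.mem_filter] at hm
    rcases hm with rfl | ⟨-, hm⟩ <;> assumption
  obtain ⟨x, hcx, hxm⟩ := exists_between hcm
  refine ⟨x, ⟨hcx, hxm.trans_le (hmin d (by simp))⟩, fun y hy hyx => ?_⟩
  exact (hxm.trans_le (hmin y (by simp [hy, hyx.1]))).not_ge hyx.2

lemma exists_mem_uIoo_forall_notMem (A : Finset α) {c d : α} (h : c ≠ d) :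
    ∃ x ∈ uIoo c d, x ∉ A ∧ ∀ y ∈ A, y ∉ uIoo c x := by
  rcases h.lt_or_gt with h | h
  · obtain ⟨x, hx, hA⟩ := exists_mem_Ioo_forall_notMem_Ioc A h
    refine ⟨x, mem_uIoo_of_lt hx.1 hx.2, fun hxA => hA x hxA ⟨hx.1, le_rfl⟩,
      fun y hy hyx => ?_⟩
    rw [uIoo_of_lt hx.1] at hyx
    exact hA y hy (Ioo_subset_Ioc_self hyx)
  · obtain ⟨x, hx, hA⟩ := exists_mem_Ioo_forall_notMem_Ioc (A.map toDual.toEmbedding)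
      (toDual_lt_toDual.2 h)
    have hxc : ofDual x < c := hx.1
    have hA' : ∀ y ∈ A, y ∉ Ico (ofDual x) c :=
      fun y hy hyx => hA (toDual y) (Finset.mem_map_of_mem _ hy) ⟨hyx.2, hyx.1⟩
    refine ⟨ofDual x, mem_uIoo_of_gt hx.2 hxc, fun hxA => hA' _ hxA ⟨le_rfl, hxc⟩,
      fun y hy hyx => ?_⟩
    rw [uIoo_of_gt hxc] at hyx
    exact hA' y hy ⟨hyx.1.le, hyx.2⟩

end Order

lemma exists_nat_lt_iff_lt {ι α : Type*} [Fintype ι] [LinearOrder α] (f : ι → α) :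
    ∃ g : ι → ℕ, ∀ i j, g i < g j ↔ f i < f j := by
  refine ⟨fun i => (Finset.univ.filter fun k => f k < f i).card,
    fun i j => ⟨fun h => ?_, fun h => ?_⟩⟩
  · contrapose! h
    refine Finset.card_le_card fun k hk => ?_
    simp only [Finset.mem_filter] at hk ⊢
    exact ⟨hk.1, hk.2.trans_le h⟩
  · refine Finset.card_lt_card
      ((Finset.ssubset_iff_of_subset fun k hk => ?_).2 ⟨i, by simpa using h, by simp⟩)
    simp only [Finset.mem_filter] at hk ⊢
    exact ⟨hk.1, hk.2.trans h⟩

lemma injOn_update_of_injOn_erase {ι β : Type*} {f : ι → β} {s : Finset ι} {a : ι} {x : β}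
    (hf : InjOn f (s.erase a)) (hx : ∀ u ∈ s.erase a, f u ≠ x) : InjOn (update f a x) s := by
  intro u hu w hw h
  simp only [update_apply] at h
  split_ifs at h with hua hwa hwa
  · exact hua.trans hwa.symm
  · exact absurd h.symm (hx w (Finset.mem_erase.2 ⟨hwa, hw⟩))
  · exact absurd h (hx u (Finset.mem_erase.2 ⟨hua, hu⟩))
  · exact hf (Finset.mem_erase.2 ⟨hua, hu⟩) (Finset.mem_erase.2 ⟨hwa, hw⟩) h

/-- The invariants of `AuxiliaryLowHigh` on the set `S` of remaining non-root vertices. The two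
trees are acyclic because `b` and `r` decrease some depth function. -/
structure IsAuxConfig (S : Finset V) (z α β : V) (b r : V → V) : Prop where
  root_notMem : z ∉ S
  α_mem : α ∈ S
  β_mem : β ∈ S
  α_ne_β : α ≠ β
  b_α : b α = z
  b_β : b β = z
  b_mem : ∀ u ∈ S, b u = z ∨ b u ∈ S
  r_mem : ∀ u ∈ S, r u = z ∨ r u ∈ S
  parents : ∀ u ∈ S, (b u = z ∧ r u = z) ∨ (b u ≠ z ∧ r u ≠ z ∧ b u ≠ r u)
  b_depth : ∃ d : V → ℕ, ∀ u ∈ S, d (b u) < d u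
  r_depth : ∃ d : V → ℕ, ∀ u ∈ S, d (r u) < d u
  divergent : ∀ u ∈ S, ∀ x, ReflTransGen (ParentStep b z) u x →
    ReflTransGen (ParentStep r z) u x → x = u ∨ x = z

structure IsAuxOrder (S : Finset V) (z α β : V) (b r : V → V) (ζ : V → ℚ) : Prop where
  injOn : InjOn ζ S
  lt_of_ne_α : ∀ u ∈ S, u ≠ α → ζ α < ζ u
  lt_of_ne_β : ∀ u ∈ S, u ≠ β → ζ u < ζ β
  mem_uIoo : ∀ u ∈ S, b u ≠ z → ζ u ∈ uIoo (ζ (b u)) (ζ (r u))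

variable {S : Finset V} {z α β v : V} {b r : V → V}

namespace IsAuxOrder

lemma mem_Icc {ζ : V → ℚ} (hζ : IsAuxOrder S z α β b r ζ) (hαβ : α ≠ β) (hv : v ∈ S) :
    ζ v ∈ Icc (ζ α) (ζ β) := by
  rcases eq_or_ne v α with rfl | hvα
  · exact ⟨le_rfl, (hζ.lt_of_ne_β v hv hαβ).le⟩
  rcases eq_or_ne v β with rfl | hvβ
  · exact ⟨(hζ.lt_of_ne_α v hv hvα).le, le_rfl⟩
  exact ⟨(hζ.lt_of_ne_α v hv hvα).le, (hζ.lt_of_ne_β v hv hvβ).le⟩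

lemma update {b' r' : V → V} {ζ : V → ℚ} {x : ℚ} (hζ : IsAuxOrder (S.erase v) z α β b' r' ζ)
    (hvα : v ≠ α) (hvβ : v ≠ β) (hx : x ∈ Ioo (ζ α) (ζ β)) (hxA : ∀ u ∈ S.erase v, ζ u ≠ x)
    (hmem : ∀ u ∈ S, b u ≠ z →
      update ζ v x u ∈ uIoo (update ζ v x (b u)) (update ζ v x (r u))) :
    IsAuxOrder S z α β b r (update ζ v x) := by
  refine ⟨injOn_update_of_injOn_erase hζ.injOn hxA, fun u hu huα => ?_, fun u hu huβ => ?_,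
    hmem⟩
  all_goals
    simp only [update_apply, if_neg hvα.symm, if_neg hvβ.symm]
    split_ifs with huv
  · exact hx.1
  · exact hζ.lt_of_ne_α u (Finset.mem_erase.2 ⟨huv, hu⟩) huα
  · exact hx.2
  · exact hζ.lt_of_ne_β u (Finset.mem_erase.2 ⟨huv, hu⟩) huβ

end IsAuxOrder

namespace IsAuxConfig

variable (H : IsAuxConfig S z α β b r)
include H

lemma ne_root (hv : v ∈ S) : v ≠ z := fun h => H.root_notMem (h ▸ hv)

lemma r_eq_root (hv : v ∈ S) (hbv : b v = z) : r v = z :=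
  ((H.parents v hv).resolve_right fun h => h.1 hbv).2

lemma r_ne_root (hv : v ∈ S) (hbv : b v ≠ z) : r v ≠ z :=
  ((H.parents v hv).resolve_left fun h => hbv h.1).2.1

lemma b_ne_r (hv : v ∈ S) (hbv : b v ≠ z) : b v ≠ r v :=
  ((H.parents v hv).resolve_left fun h => hbv h.1).2.2

lemma b_ne_self (hv : v ∈ S) : b v ≠ v := by
  obtain ⟨d, hd⟩ := H.b_depth
  exact fun h => (hd v hv).ne (by rw [h])

lemma r_ne_self (hv : v ∈ S) : r v ≠ v := by
  obtain ⟨d, hd⟩ := H.r_depth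
  exact fun h => (hd v hv).ne (by rw [h])

/-- A deepest vertex in `b` among those with non-root parents. -/
lemma exists_b_leaf (hT : ∃ v ∈ S, b v ≠ z) : ∃ v ∈ S, b v ≠ z ∧ ∀ u ∈ S, b u ≠ v := by
  obtain ⟨d, hd⟩ := H.b_depth
  obtain ⟨v, hvT, hmax⟩ :=
    (S.filter (b · ≠ z)).exists_max_image d (by simpa [Finset.Nonempty] using hT)
  rw [Finset.mem_filter] at hvT
  refine ⟨v, hvT.1, hvT.2, fun u hu hbu => ?_⟩
  have hdu := hmax u (Finset.mem_filter.2 ⟨hu, hbu ▸ H.ne_root hvT.1⟩)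
  have := hd u hu
  rw [hbu] at this
  omega

lemma erase_bypass (hv : v ∈ S) (hbv : b v ≠ z) (hleaf : ∀ u ∈ S, b u ≠ v) :
    IsAuxConfig (S.erase v) z α β b (bypass r v) := by
  have hvz := H.ne_root hv
  have hrv := H.r_ne_root hv hbv
  have hbypass : ∀ u, r u ≠ v → bypass r v u = r u := fun u h => if_neg h
  refine ⟨fun h => H.root_notMem (Finset.mem_of_mem_erase h),
    Finset.mem_erase.2 ⟨fun h => hbv (h ▸ H.b_α), H.α_mem⟩,
    Finset.mem_erase.2 ⟨fun h => hbv (h ▸ H.b_β), H.β_mem⟩, H.α_ne_β, H.b_α, H.b_β,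
    fun u hu => ?_, fun u hu => ?_, fun u hu => ?_, ?_, ?_, fun u hu x hb hr => ?_⟩
  · replace hu := Finset.mem_of_mem_erase hu
    exact (H.b_mem u hu).imp_right fun h => Finset.mem_erase.2 ⟨hleaf u hu, h⟩
  · replace hu := Finset.mem_of_mem_erase hu
    by_cases hru : r u = v
    · simp only [bypass, if_pos hru]
      exact .inr (Finset.mem_erase.2 ⟨H.r_ne_self hv, (H.r_mem v hv).resolve_left hrv⟩)
    · rw [hbypass u hru]
      exact (H.r_mem u hu).imp_right fun h => Finset.mem_erase.2 ⟨hru, h⟩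
  · replace hu := Finset.mem_of_mem_erase hu
    by_cases hru : r u = v
    · have huz := H.ne_root hu
      have hbu : b u ≠ z := fun h => hvz (hru ▸ H.r_eq_root hu h)
      simp only [bypass, if_pos hru]
      refine .inr ⟨hbu, hrv, fun h => ?_⟩
      -- `b u` and `r v` are ancestors of `u` in `b` and in `r`
      rcases H.divergent u hu (b u) (.single ⟨huz, rfl⟩)
        (h ▸ (ReflTransGen.single ⟨huz, hru⟩).tail ⟨hvz, rfl⟩) with h' | h'
      · exact H.b_ne_self hu h'
      · exact hbu h'
    · rw [hbypass u hru]
      exact H.parents u hu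
  · obtain ⟨d, hd⟩ := H.b_depth
    exact ⟨d, fun u hu => hd u (Finset.mem_of_mem_erase hu)⟩
  · obtain ⟨d, hd⟩ := H.r_depth
    refine ⟨d, fun u hu => ?_⟩
    replace hu := Finset.mem_of_mem_erase hu
    by_cases hru : r u = v
    · simp only [bypass, if_pos hru]
      exact (hd v hv).trans (hru ▸ hd u hu)
    · rw [hbypass u hru]
      exact hd u hu
  · exact H.divergent u (Finset.mem_of_mem_erase hu) x hb
      (reflTransGen_parentStep_of_bypass hvz hr)

lemma erase_of_forall_b_eq (hvα : v ≠ α) (hvβ : v ≠ β) (hb : ∀ u ∈ S, b u = z) :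
    IsAuxConfig (S.erase v) z α β b r := by
  have hr : ∀ u ∈ S, r u = z := fun u hu => H.r_eq_root hu (hb u hu)
  obtain ⟨db, hdb⟩ := H.b_depth
  obtain ⟨dr, hdr⟩ := H.r_depth
  exact ⟨fun h => H.root_notMem (Finset.mem_of_mem_erase h),
    Finset.mem_erase.2 ⟨hvα.symm, H.α_mem⟩, Finset.mem_erase.2 ⟨hvβ.symm, H.β_mem⟩, H.α_ne_β,
    H.b_α, H.b_β, fun u hu => .inl (hb u (Finset.mem_of_mem_erase hu)),
    fun u hu => .inl (hr u (Finset.mem_of_mem_erase hu)),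
    fun u hu => H.parents u (Finset.mem_of_mem_erase hu),
    ⟨db, fun u hu => hdb u (Finset.mem_of_mem_erase hu)⟩,
    ⟨dr, fun u hu => hdr u (Finset.mem_of_mem_erase hu)⟩,
    fun u hu => H.divergent u (Finset.mem_of_mem_erase hu)⟩

/-- The deleted `b`-leaf `v` is reinserted right next to `r v`, on the side of `b v`. -/
lemma exists_isAuxOrder_of_erase_bypass (hv : v ∈ S) (hbv : b v ≠ z)
    (hleaf : ∀ u ∈ S, b u ≠ v) {ζ : V → ℚ}
    (hζ : IsAuxOrder (S.erase v) z α β b (bypass r v) ζ) : ∃ ζ, IsAuxOrder S z α β b r ζ := by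
  have hbvS : b v ∈ S.erase v :=
    Finset.mem_erase.2 ⟨H.b_ne_self hv, (H.b_mem v hv).resolve_left hbv⟩
  have hrvS : r v ∈ S.erase v :=
    Finset.mem_erase.2 ⟨H.r_ne_self hv, (H.r_mem v hv).resolve_left (H.r_ne_root hv hbv)⟩
  obtain ⟨x, hx, hxA, hgap⟩ := exists_mem_uIoo_forall_notMem ((S.erase v).image ζ)
    (fun h => H.b_ne_r hv hbv (hζ.injOn hbvS hrvS h.symm) : ζ (r v) ≠ ζ (b v))
  have hxA' : ∀ u ∈ S.erase v, ζ u ≠ x := fun u hu h =>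
    hxA (h ▸ Finset.mem_image_of_mem ζ hu)
  refine ⟨_, hζ.update (fun h => hbv (h ▸ H.b_α)) (fun h => hbv (h ▸ H.b_β))
    (uIoo_subset_Ioo (hζ.mem_Icc H.α_ne_β hrvS) (hζ.mem_Icc H.α_ne_β hbvS) hx) hxA'
    fun u hu hbu => ?_⟩
  rcases eq_or_ne u v with rfl | huv
  · rw [update_self, update_of_ne (H.b_ne_self hu), update_of_ne (H.r_ne_self hu), uIoo_comm]
    exact hx
  have huS := Finset.mem_erase.2 ⟨huv, hu⟩
  have hmem := hζ.mem_uIoo u huS hbu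
  rw [update_of_ne huv, update_of_ne (hleaf u hu)]
  by_cases hru : r u = v
  · simp only [bypass, if_pos hru] at hmem
    rw [hru, update_self]
    exact mem_uIoo_of_notMem_uIoo hmem (hgap _ (Finset.mem_image_of_mem ζ huS)) (hxA' u huS)
  · simp only [bypass, if_neg hru] at hmem
    rwa [update_of_ne hru]

lemma exists_isAuxOrder_of_erase (hvα : v ≠ α) (hvβ : v ≠ β) (hb : ∀ u ∈ S, b u = z)
    {ζ : V → ℚ} (hζ : IsAuxOrder (S.erase v) z α β b r ζ) : ∃ ζ, IsAuxOrder S z α β b r ζ := by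
  have hαβ : ζ α < ζ β :=
    hζ.lt_of_ne_α β (Finset.mem_erase.2 ⟨hvβ.symm, H.β_mem⟩) H.α_ne_β.symm
  obtain ⟨x, hx, hxA⟩ := (Ioo_infinite hαβ).exists_notMem_finset ((S.erase v).image ζ)
  exact ⟨_, hζ.update hvα hvβ hx (fun u hu h => hxA (h ▸ Finset.mem_image_of_mem ζ hu))
    fun u hu hbu => absurd (hb u hu) hbu⟩

lemma exists_isAuxOrder_of_subset (hS : ∀ u ∈ S, u = α ∨ u = β) :
    ∃ ζ, IsAuxOrder S z α β b r ζ := by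
  refine ⟨fun u => if u = α then 0 else 1, fun u hu w hw h => ?_, fun u hu huα => ?_,
    fun u hu huβ => ?_, fun u hu hbu => ?_⟩
  · rcases hS u hu with rfl | rfl <;> rcases hS w hw with rfl | rfl <;>
      simp_all [H.α_ne_β.symm]
  · simp [huα]
  · rcases hS u hu with rfl | rfl
    · simp [H.α_ne_β.symm]
    · exact absurd rfl huβ
  · rcases hS u hu with rfl | rfl
    · exact absurd H.b_α hbu
    · exact absurd H.b_β hbu

theorem exists_isAuxOrder : ∃ ζ, IsAuxOrder S z α β b r ζ := by
  induction S using Finset.strongInduction generalizing r with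
  | H S ih =>
    by_cases hT : ∃ v ∈ S, b v ≠ z
    · obtain ⟨v, hv, hbv, hleaf⟩ := H.exists_b_leaf hT
      obtain ⟨ζ, hζ⟩ := ih _ (Finset.erase_ssubset hv) (H.erase_bypass hv hbv hleaf)
      exact H.exists_isAuxOrder_of_erase_bypass hv hbv hleaf hζ
    push Not at hT
    by_cases hS : ∃ v ∈ S, v ≠ α ∧ v ≠ β
    · obtain ⟨v, hv, hvα, hvβ⟩ := hS
      obtain ⟨ζ, hζ⟩ := ih _ (Finset.erase_ssubset hv) (H.erase_of_forall_b_eq hvα hvβ hT)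
      exact H.exists_isAuxOrder_of_erase hvα hvβ hT hζ
    push Not at hS
    exact H.exists_isAuxOrder_of_subset fun u hu => or_iff_not_imp_left.2 (hS u hu)

end IsAuxConfig

lemma isAuxConfig_of_auxInv [Fintype V] {EA : V → V → Prop} (hall : ∀ v, Reachable EA z v)
    (hinv : AuxInv EA z b r) (hα : ∀ u, EA u α → u = z) (hβ : ∀ u, EA u β → u = z)
    (hαβ : α ≠ β) (hαz : α ≠ z) (hβz : β ≠ z) :
    IsAuxConfig (Finset.univ.erase z) z α β b r := by
  obtain ⟨hflat, ⟨hb, hr, hdiv⟩, hpar⟩ := hinv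
  have hmem : ∀ u, u = z ∨ u ∈ Finset.univ.erase z := fun u =>
    (em _).imp_right fun h => Finset.mem_erase.2 ⟨h, Finset.mem_univ u⟩
  obtain ⟨db, hdb⟩ := hb.exists_depth hall
  obtain ⟨dr, hdr⟩ := hr.exists_depth hall
  refine ⟨Finset.notMem_erase z _, Finset.mem_erase.2 ⟨hαz, Finset.mem_univ α⟩,
    Finset.mem_erase.2 ⟨hβz, Finset.mem_univ β⟩, hαβ, hα _ (hb.1 α (hall α) hαz),
    hβ _ (hb.1 β (hall β) hβz), fun u _ => hmem (b u), fun u _ => hmem (r u),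
    fun u hu => hpar u (hall u) (Finset.ne_of_mem_erase hu),
    ⟨db, fun u hu => hdb u (Finset.ne_of_mem_erase hu)⟩,
    ⟨dr, fun u hu => hdr u (Finset.ne_of_mem_erase hu)⟩, fun u hu x hxb hxr => ?_⟩
  obtain ⟨p, hp⟩ := hb.2 u (hall u)
  obtain ⟨q, hq⟩ := hr.2 u (hall u)
  exact (hflat u (hall u) (Finset.ne_of_mem_erase hu) x
    (hdiv u p q (hall u) hp hq x (hp.mem_of_reflTransGen hxb) (hq.mem_of_reflTransGen hxr))).symm

theorem stmt9_general [Fintype V] (EA : V → V → Prop) (z α β : V) (b r : V → V)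
    (hall : ∀ v : V, Reachable EA z v)
    (hinv : AuxInv EA z b r)
    (hα : ∀ u, EA u α → u = z)
    (hβ : ∀ u, EA u β → u = z)
    (hαβ : α ≠ β) (hαz' : α ≠ z) (hβz' : β ≠ z) :
    ∃ ζ : V → ℕ,
      (∀ u v : V, u ≠ v → ζ u ≠ ζ v) ∧
      (∀ v, v ≠ z → (EA z v ∨ ∃ u w, EA u v ∧ EA w v ∧ u ≠ z ∧ w ≠ z ∧
        ζ u < ζ v ∧ ζ v < ζ w)) ∧
      (∀ v, v ≠ z → v ≠ α → v ≠ β → ζ α < ζ v ∧ ζ v < ζ β) := by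
  have H := isAuxConfig_of_auxInv hall hinv hα hβ hαβ hαz' hβz'
  obtain ⟨-, ⟨hb, hr, -⟩, -⟩ := hinv
  obtain ⟨ζ, hζ⟩ := H.exists_isAuxOrder
  have hS : ∀ {u}, u ≠ z → u ∈ Finset.univ.erase z := fun hu =>
    Finset.mem_erase.2 ⟨hu, Finset.mem_univ _⟩
  have hinj : Injective (update ζ z (ζ β + 1)) := by
    simpa using injOn_update_of_injOn_erase hζ.injOn fun u hu h =>
      (hζ.mem_Icc hαβ hu).2.not_gt (h ▸ lt_add_one (ζ β))
  obtain ⟨N, hN⟩ := exists_nat_lt_iff_lt (update ζ z (ζ β + 1))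
  have hNζ : ∀ {u w}, u ≠ z → w ≠ z → ζ u < ζ w → N u < N w := fun hu hw h => by
    rwa [hN, update_of_ne hu, update_of_ne hw]
  refine ⟨N, fun u w huw => ?_, fun v hv => ?_, fun v hv hvα hvβ => ?_⟩
  · rcases (hinj.ne huw).lt_or_gt with h | h
    · exact ((hN u w).2 h).ne
    · exact ((hN w u).2 h).ne'
  · have hEb := hb.1 v (hall v) hv
    have hEr := hr.1 v (hall v) hv
    by_cases hbv : b v = z
    · exact .inl (hbv ▸ hEb)
    have hrv := H.r_ne_root (hS hv) hbv
    have h := hζ.mem_uIoo v (hS hv) hbv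
    rw [uIoo_eq_union] at h
    rcases h with h | h
    · exact .inr ⟨b v, r v, hEb, hEr, hbv, hrv, hNζ hbv hv h.1, hNζ hv hrv h.2⟩
    · exact .inr ⟨r v, b v, hEr, hEb, hrv, hbv, hNζ hrv hv h.1, hNζ hv hbv h.2⟩
  · exact ⟨hNζ hαz' hv (hζ.lt_of_ne_α v (hS hv) hvα),
      hNζ hv hβz' (hζ.lt_of_ne_β v (hS hv) hvβ)⟩

/-- On a flow graph `(EA, z)` with flat dominator tree, distinguished
vertices `α*`, `β*` whose only entering edge comes from `z`, and divergent spanning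
trees `b`, `r` satisfying the invariants of AuxiliaryLowHigh, the algorithm computes a
low-high order `ζ` of `G_A` in which `α*` is first and `β*` is last among the non-root
vertices. -/
theorem stmt9 [Fintype V] (EA : V → V → Prop) (z α β : V) (b r : V → V)
    (hall : ∀ v : V, Reachable EA z v)
    (hinv : AuxInv EA z b r)
    (hαz : EA z α) (hα : ∀ u, EA u α → u = z)
    (hβz : EA z β) (hβ : ∀ u, EA u β → u = z)
    (hαβ : α ≠ β) (hαz' : α ≠ z) (hβz' : β ≠ z) :
    ∃ ζ : V → ℕ,
      (∀ u v : V, u ≠ v → ζ u ≠ ζ v) ∧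
      (∀ v, v ≠ z → (EA z v ∨ ∃ u w, EA u v ∧ EA w v ∧ u ≠ z ∧ w ≠ z ∧
        ζ u < ζ v ∧ ζ v < ζ w)) ∧
      (∀ v, v ≠ z → v ≠ α → v ≠ β → ζ α < ζ v ∧ ζ v < ζ β) :=
  stmt9_general EA z α β b r hall hinv hα hβ hαβ hαz' hβz'

end Dominators
end

section
/- Let D be the dominator tree of a flow graph G, and suppose for each non-leaf vertex w of D we are given a low-high order δ_w of the derived flow graph G_w. Then the preorder δ of D obtained by a depth-first traversal of D that visits the children of each vertex w in the order δ_w is a low-high order of G. -/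
open scoped Classical

namespace Dominators

variable {V : Type*}

/-- The edge relation of the derived flow graph `G_w` of `w`: its vertices are `w` and
the children of `w` in the dominator tree, and for each edge `(σ, b)` of `G` with `b` a
child of `w` and `b` not an ancestor of `σ`, it contains the derived edge `(a, b)`
where `a = w` if `σ = w`, and otherwise `a` is the child of `w` (sibling of `b`) that
is an ancestor of `σ`. -/
def DerivedEdge (E : V → V → Prop) (s w : V) : V → V → Prop := fun a b =>
  IsIdom E s w b ∧ ∃ σ, E σ b ∧ ¬ Dom E s b σ ∧
    ((σ = w ∧ a = w) ∨ (σ ≠ w ∧ IsIdom E s w a ∧ Dom E s a σ))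

/-! Let `w = d(v)`. A derived edge `(w, v)` of `G_w` can only come from the edge `(w, v)` of `G`.
Otherwise `v` has derived edges from siblings `a <_δ v <_δ b`, coming from edges `(σ₁, v)`,
`(σ₂, v)` of `G` with `a` an ancestor of `σ₁` and `b` one of `σ₂`. The descendants of `a` form a
δ-interval starting at `a` that misses `v`, so `σ₁ <_δ v`; and `v <_δ b ≤_δ σ₂`, where `σ₂` is
not a descendant of `v`. -/

section Walks

variable {E : V → V → Prop} {s x y z u u' v : V} {p q r : List V}

theorem Walk.head_mem (h : Walk E x y p) : x ∈ p := by
  cases h <;> simp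

theorem Walk.last_mem (h : Walk E x y p) : y ∈ p := by
  induction h with
  | nil => simp
  | cons _ _ ih => exact List.mem_cons_of_mem _ ih

theorem Walk.append_s17 (h₁ : Walk E x y q) (h₂ : Walk E y z (y :: r)) : Walk E x z (q ++ r) := by
  induction h₁ with
  | nil => exact h₂
  | cons h _ ih => exact Walk.cons h (ih h₂)

theorem Walk.exists_walk_of_mem (h : Walk E x y p) (hu : u ∈ p) : ∃ q, Walk E x u q := by
  induction h with
  | nil v =>
    rw [List.mem_singleton.1 hu]
    exact ⟨_, Walk.nil v⟩
  | @cons a b c p' h _ ih =>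
    rcases List.mem_cons.1 hu with rfl | hu
    · exact ⟨_, Walk.nil u⟩
    · obtain ⟨q, hq⟩ := ih hu
      exact ⟨_, Walk.cons h hq⟩

theorem Walk.exists_suffix_of_mem (h : Walk E x y p) (hu : u ∈ p) :
    ∃ r, Walk E u y (u :: r) ∧ r.length < p.length := by
  induction h with
  | nil v =>
    rw [List.mem_singleton.1 hu]
    exact ⟨[], Walk.nil v, by simp⟩
  | @cons a b c p' h hw ih =>
    rcases List.mem_cons.1 hu with rfl | hu
    · exact ⟨p', Walk.cons h hw, by simp⟩
    · obtain ⟨r, hr, hlen⟩ := ih hu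
      exact ⟨r, hr, by simp only [List.length_cons]; omega⟩

theorem reachable_of_dom (hd : Dom E s u v) (hv : Reachable E s v) : Reachable E s u := by
  obtain ⟨p, hp⟩ := hv
  exact hp.exists_walk_of_mem (hd p hp)

theorem reachable_of_not_dom (h : ¬ Dom E s u v) : Reachable E s v := by
  by_contra hv
  exact h fun p hp => absurd ⟨p, hp⟩ hv

theorem dom_of_dom_of_walk (hd : Dom E s u' v) (hw : Walk E u v (u :: r)) (hr : u' ∉ r) :
    Dom E s u' u := by
  intro q hq
  rcases List.mem_append.1 (hd _ (hq.append_s17 hw)) with h | h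
  · exact h
  · exact absurd h hr

/-- The immediate dominator is the proper dominator `u` of `v` admitting the shortest walk
`u ⇝ v`: such a walk avoids every other proper dominator. -/
theorem exists_isIdom (hv : Reachable E s v) (hvs : v ≠ s) : ∃ w, IsIdom E s w v := by
  have hex : ∃ n u r, u ≠ v ∧ Dom E s u v ∧ Walk E u v (u :: r) ∧ r.length = n := by
    obtain ⟨p, hp⟩ := hv
    obtain ⟨r, hr, -⟩ := hp.exists_suffix_of_mem hp.head_mem
    exact ⟨_, s, r, hvs.symm, fun _ h => h.head_mem, hr, rfl⟩
  obtain ⟨u, r, huv, hdom, hwalk, hlen⟩ := Nat.find_spec hex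
  refine ⟨u, huv, hdom, fun u' hu'v hu'dom => ?_⟩
  by_cases hu' : u' = u
  · exact hu' ▸ fun _ h => h.last_mem
  refine dom_of_dom_of_walk hu'dom hwalk fun hmem => ?_
  cases hwalk with
  | nil => simp at hmem
  | cons h hw =>
    obtain ⟨r', hr', hlen'⟩ := hw.exists_suffix_of_mem hmem
    exact Nat.find_min hex (hlen ▸ hlen') ⟨u', r', hu'v, hu'dom, hr', rfl⟩

end Walks

section Preorder

variable {E : V → V → Prop} {s a v w σ : V} {δ : V → ℕ}

theorem IsPreorderOfD.eq_of_dom_of_dom (hpre : IsPreorderOfD E s δ) (ha : Reachable E s a)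
    (hw : Reachable E s w) (haw : Dom E s a w) (hwa : Dom E s w a) : a = w := by
  by_contra hne
  exact hpre.1 a w ha hw hne (le_antisymm (hpre.2.1 a w hw haw) (hpre.2.1 w a ha hwa))

theorem IsPreorderOfD.not_dom_of_isIdom (hpre : IsPreorderOfD E s δ) (hv : Reachable E s v)
    (hw : IsIdom E s w v) (ha : IsIdom E s w a) (hav : a ≠ v) : ¬ Dom E s a v := by
  intro hdom
  exact ha.1 (hpre.eq_of_dom_of_dom (reachable_of_dom hdom hv) (reachable_of_dom hw.2.1 hv)
    (hw.2.2 a hav hdom) ha.2.1).symm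

theorem IsPreorderOfD.lt_of_not_dom (hpre : IsPreorderOfD E s δ) (hv : Reachable E s v)
    (haσ : Dom E s a σ) (hav : δ a ≤ δ v) (hnd : ¬ Dom E s a v) : δ σ < δ v :=
  lt_of_not_ge fun h => hnd (hpre.2.2 a σ v hv haσ hav h)

end Preorder

section DerivedEdge

variable {E : V → V → Prop} {s a v w : V}

theorem DerivedEdge.edge_of_self (h : DerivedEdge E s w w v) : E w v := by
  obtain ⟨-, σ, hE, -, ⟨rfl, -⟩ | ⟨-, hww, -⟩⟩ := h
  · exact hE
  · exact absurd rfl hww.1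

theorem DerivedEdge.exists_edge_of_ne (h : DerivedEdge E s w a v) (haw : a ≠ w) :
    ∃ σ, E σ v ∧ ¬ Dom E s v σ ∧ IsIdom E s w a ∧ Dom E s a σ := by
  obtain ⟨-, σ, hE, hnd, ⟨-, rfl⟩ | ⟨-, ha, haσ⟩⟩ := h
  · exact absurd rfl haw
  · exact ⟨σ, hE, hnd, ha, haσ⟩

end DerivedEdge

/-- If `δ` is a preorder of the dominator tree of `(G, s)` such that for
every non-leaf `w` the order induced by `δ` on the children of `w` is a low-high order
of the derived flow graph `G_w` (i.e. each child `v` of `w` either has the edge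
`(w, v)` in `G_w`, or has two derived edges entering it from siblings `a`, `b` with
`δ a < δ v < δ b`), then `δ` is a low-high order of `G`. -/
theorem stmt17 (E : V → V → Prop) (s : V) (δ : V → ℕ)
    (hpre : IsPreorderOfD E s δ)
    (hloc : ∀ w v, IsIdom E s w v →
      (DerivedEdge E s w w v ∨
       ∃ a b, DerivedEdge E s w a v ∧ DerivedEdge E s w b v ∧ a ≠ w ∧ b ≠ w ∧
         δ a < δ v ∧ δ v < δ b)) :
    IsLowHigh E s δ := by
  refine ⟨hpre, fun v hv hvs => ?_⟩
  obtain ⟨w, hw⟩ := exists_isIdom hv hvs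
  rcases hloc w v hw with hwv | ⟨a, b, hav, hbv, haw, hbw, hlt, hgt⟩
  · exact Or.inl ⟨w, hw, hwv.edge_of_self⟩
  obtain ⟨σ₁, hE₁, hnd₁, ha, haσ₁⟩ := hav.exists_edge_of_ne haw
  obtain ⟨σ₂, hE₂, hnd₂, -, hbσ₂⟩ := hbv.exists_edge_of_ne hbw
  have hr₂ : Reachable E s σ₂ := reachable_of_not_dom hnd₂
  have hav : ¬ Dom E s a v := hpre.not_dom_of_isIdom hv hw ha (ne_of_lt hlt ∘ congrArg δ)
  have hσ₁ : δ σ₁ < δ v := hpre.lt_of_not_dom hv haσ₁ hlt.le hav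
  have hσ₂ : δ v < δ σ₂ := hgt.trans_le (hpre.2.1 b σ₂ hr₂ hbσ₂)
  exact Or.inr ⟨σ₁, σ₂, hE₁, hE₂, reachable_of_not_dom hnd₁, hr₂, hσ₁, hσ₂, hnd₂⟩

end Dominators
end

section
/- Let G' be a flow graph obtained from G by inserting edge (x,y) with x,y reachable, let z = nca(x,y) in the old dominator tree D, let δ_z be a low-high order of the derived flow graph G_z of z in G, let δ'_z be any augmentation of δ_z (inserting the affected vertices around the vertex c adjacent to its old position), and let δ' be a preorder of the new dominator tree D' extending δ'_z. Then δ' is a low-high order in G' for every vertex v that was a child of z in D. -/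
open scoped Classical

namespace Dominators

variable {V : Type*}

section Aux18
variable {F F' : V → V → Prop} {s : V}

theorem Walk.ne_nil {a b : V} {p : List V} (h : Walk F a b p) : p ≠ [] := by
  cases h <;> simp
theorem walk_shape {a b : V} {p : List V} (h : Walk F a b p) : ∃ q, p = a :: q := by
  cases h with
  | nil => exact ⟨[], rfl⟩
  | cons h hw => exact ⟨_, rfl⟩
theorem walk_end_mem {a b : V} {p : List V} (h : Walk F a b p) : b ∈ p := by
  induction h with
  | nil => simp
  | cons h hw ih => simp [ih]
theorem walk_head_mem {a b : V} {p : List V} (h : Walk F a b p) : a ∈ p := by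
  obtain ⟨q, rfl⟩ := walk_shape h; simp
theorem walk_mono (hFF : ∀ a b, F a b → F' a b) {a b : V} {p : List V} (h : Walk F a b p) :
    Walk F' a b p := by
  induction h with
  | nil v => exact Walk.nil v
  | cons h hw ih => exact Walk.cons (hFF _ _ h) ih
theorem walk_append {a b c : V} {p q : List V} (h1 : Walk F a b p) (h2 : Walk F b c q) :
    Walk F a c (p ++ q.tail) := by
  induction h1 with
  | nil v => obtain ⟨q', rfl⟩ := walk_shape h2; simpa using h2
  | cons h hw ih => exact Walk.cons h (ih h2)
theorem walk_lastSplit {a b d : V} {p : List V} (h : Walk F a b p) (hd : d ∈ p) :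
    ∃ q r, Walk F a d q ∧ Walk F d b r ∧ p = q ++ r.tail ∧ d ∉ r.tail := by
  induction h with
  | nil v =>
    simp only [List.mem_singleton] at hd; subst hd
    exact ⟨[d], [d], Walk.nil d, Walk.nil d, by simp, by simp⟩
  | @cons u v w p' h hw ih =>
    by_cases hdp : d ∈ p'
    · obtain ⟨q, r, w1, w2, hpe, hnd⟩ := ih hdp
      exact ⟨u :: q, r, Walk.cons h w1, w2, by simp [hpe], hnd⟩
    · have hdu : d = u := by
        rcases List.mem_cons.1 hd with h' | h'
        · exact h'
        · exact absurd h' hdp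
      subst hdu
      exact ⟨[d], d :: p', Walk.nil d, Walk.cons h hw, by simp, hdp⟩

theorem dom_self (u : V) : Dom F s u u := fun _ hp => walk_end_mem hp
theorem dom_start (w : V) : Dom F s s w := fun _ hp => walk_head_mem hp
theorem dom_trans {u t w : V} (h1 : Dom F s u t) (h2 : Dom F s t w) : Dom F s u w := by
  intro p hp
  obtain ⟨q, r, w1, _, hpe, _⟩ := walk_lastSplit hp (h2 p hp)
  exact hpe ▸ List.mem_append_left _ (h1 q w1)
theorem reachable_of_dom_s18 {u w : V} (h : Dom F s u w) (hr : Reachable F s w) :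
    Reachable F s u := by
  obtain ⟨p, hp⟩ := hr
  obtain ⟨q, r, w1, _, _, _⟩ := walk_lastSplit hp (h p hp)
  exact ⟨q, w1⟩

theorem dom_antisymm_aux :
    ∀ n (p : List V) {u w : V}, p.length ≤ n → Walk F s w p →
      Dom F s u w → Dom F s w u → u ≠ w → False := by
  intro n
  induction n with
  | zero =>
    intro p u w hl hp _ _ _
    exact hp.ne_nil (List.length_eq_zero_iff.1 (Nat.le_zero.1 hl))
  | succ n ih =>
    intro p u w hl hp h1 h2 hne
    obtain ⟨q, r, w1, w2, hpe, hnr⟩ := walk_lastSplit hp (h1 p hp)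
    obtain ⟨q2, r2, w3, w4, hqe, _⟩ := walk_lastSplit w1 (h2 q w1)
    have hrt : r.tail ≠ [] := by
      cases w2 with
      | nil => exact absurd rfl hne
      | cons h hw => exact hw.ne_nil
    have hq : q.length < p.length := by
      have h3 := List.length_pos_iff.2 hrt
      rw [hpe, List.length_append]; omega
    have hq2 : q2.length ≤ q.length := by
      rw [hqe, List.length_append]; omega
    exact ih q2 (by omega) w3 h1 h2 hne

theorem dom_antisymm {u w : V} (hr : Reachable F s w) (h1 : Dom F s u w)
    (h2 : Dom F s w u) : u = w := by
  by_contra hne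
  obtain ⟨p, hp⟩ := hr
  exact dom_antisymm_aux p.length p le_rfl hp h1 h2 hne

theorem dom_comparable {u w v : V} (hr : Reachable F s v) (h1 : Dom F s u v)
    (h2 : Dom F s w v) : Dom F s u w ∨ Dom F s w u := by
  obtain ⟨p, hp⟩ := hr
  obtain ⟨q, r, w1, w2, hpe, hnr⟩ := walk_lastSplit hp (h1 p hp)
  by_cases hw : w ∈ r.tail
  · have hwr : w ∈ r := by
      obtain ⟨r'', hre''⟩ := walk_shape w2
      rw [hre''] at hw ⊢
      exact List.mem_cons_of_mem _ hw
    obtain ⟨q', r', w3, w4, hre, hnr'⟩ := walk_lastSplit w2 hwr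
    left
    intro m hm
    have hwalk : Walk F s v (m ++ r'.tail) := walk_append hm w4
    rcases List.mem_append.1 (h1 _ hwalk) with h' | h'
    · exact h'
    · exfalso
      apply hnr
      obtain ⟨q'', hq''⟩ := walk_shape w3
      have hteq : r.tail = q'' ++ r'.tail := by rw [hre, hq'']; rfl
      rw [hteq]
      exact List.mem_append_right _ h'
  · right
    intro m hm
    have hwalk : Walk F s v (m ++ r.tail) := walk_append hm w2
    rcases List.mem_append.1 (h2 _ hwalk) with h' | h'
    · exact h'
    · exact absurd h' hw

theorem chain_max_pred (R : V → V → Prop)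
    (htrans : ∀ a b c, R a b → R b c → R a c) :
    ∀ (p : List V) (P : V → Prop),
      (∀ a, a ∈ p → P a → ∀ b, b ∈ p → P b → R a b ∨ R b a) →
      (∃ a, a ∈ p ∧ P a) → ∃ m, m ∈ p ∧ P m ∧ ∀ a, a ∈ p → P a → R a m := by
  intro p
  induction p with
  | nil => intro P _ h; simp at h
  | cons hd tl ih =>
    intro P htot hex
    by_cases hext : ∃ a, a ∈ tl ∧ P a
    · obtain ⟨m, hmt, hPm, hmax⟩ := ih P
        (fun a ha hPa b hb hPb =>
          htot a (List.mem_cons_of_mem _ ha) hPa b (List.mem_cons_of_mem _ hb) hPb) hext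
      by_cases hPh : P hd
      · rcases htot hd (List.mem_cons_self) hPh m (List.mem_cons_of_mem _ hmt) hPm with hR | hR
        · refine ⟨m, List.mem_cons_of_mem _ hmt, hPm, fun a ha hPa => ?_⟩
          rcases List.mem_cons.1 ha with rfl | ha'
          · exact hR
          · exact hmax a ha' hPa
        · refine ⟨hd, List.mem_cons_self, hPh, fun a ha hPa => ?_⟩
          rcases List.mem_cons.1 ha with rfl | ha'
          · rcases htot a (List.mem_cons_self) hPa a (List.mem_cons_self) hPa with h' | h' <;>
              exact h'
          · exact htrans a m hd (hmax a ha' hPa) hR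
      · refine ⟨m, List.mem_cons_of_mem _ hmt, hPm, fun a ha hPa => ?_⟩
        rcases List.mem_cons.1 ha with rfl | ha'
        · exact absurd hPa hPh
        · exact hmax a ha' hPa
    · obtain ⟨a, ha, hPa⟩ := hex
      have haeq : a = hd := by
        rcases List.mem_cons.1 ha with rfl | ha'
        · rfl
        · exact absurd ⟨a, ha', hPa⟩ hext
      subst haeq
      refine ⟨a, List.mem_cons_self, hPa, fun b hb hPb => ?_⟩
      rcases List.mem_cons.1 hb with rfl | hb'
      · rcases htot b (List.mem_cons_self) hPb b (List.mem_cons_self) hPb with h' | h' <;>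
          exact h'
      · exact absurd ⟨b, hb', hPb⟩ hext

theorem idom_exists {v : V} (hr : Reachable F s v) (hvs : v ≠ s) :
    ∃ d, IsIdom F s d v := by
  obtain ⟨p, hp⟩ := hr
  obtain ⟨m, hmp, ⟨hdm, hmv⟩, hmax⟩ := chain_max_pred (Dom F s)
    (fun _ _ _ hab hbc => dom_trans hab hbc) p
    (fun u => Dom F s u v ∧ u ≠ v)
    (fun a _ hPa b _ hPb => dom_comparable ⟨p, hp⟩ hPa.1 hPb.1)
    ⟨s, walk_head_mem hp, dom_start v, fun h => hvs h.symm⟩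
  exact ⟨m, hmv, hdm, fun u huv hud => hmax u (hud p hp) ⟨hud, huv⟩⟩

theorem child_exists {z v : V} (hr : Reachable F s v) (hzv : Dom F s z v)
    (hne : z ≠ v) : ∃ t, IsIdom F s z t ∧ Dom F s t v := by
  obtain ⟨p, hp⟩ := hr
  obtain ⟨m, hmp, ⟨hmv, hzm, hmz⟩, hmin⟩ := chain_max_pred (fun a b => Dom F s b a)
    (fun _ _ _ hab hbc => dom_trans hbc hab) p
    (fun u => Dom F s u v ∧ Dom F s z u ∧ u ≠ z)
    (fun a _ hPa b _ hPb => Or.symm (dom_comparable ⟨p, hp⟩ hPa.1 hPb.1))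
    ⟨v, walk_end_mem hp, dom_self v, hzv, fun h => hne h.symm⟩
  have hrm : Reachable F s m := reachable_of_dom_s18 hmv ⟨p, hp⟩
  refine ⟨m, ⟨Ne.symm hmz, hzm, fun u hum hdum => ?_⟩, hmv⟩
  by_cases huz : u = z
  · subst huz; exact dom_self u
  · by_cases hzu : Dom F s z u
    · have hup : u ∈ p := dom_trans hdum hmv p hp
      have hmu := hmin u hup ⟨dom_trans hdum hmv, hzu, huz⟩
      exact absurd (dom_antisymm hrm hdum hmu) hum
    · rcases dom_comparable hrm hzm hdum with h' | h'
      · exact absurd h' hzu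
      · exact h'

theorem walk_ins_split {E : V → V → Prop} {x y a w : V} {p : List V}
    (h : Walk (Ins E x y) a w p) :
    Walk E a w p ∨ ∃ q r, Walk (Ins E x y) a x q ∧ Walk E y w r ∧
      p = q ++ r ∧ q.length < p.length := by
  induction h with
  | nil v => exact Or.inl (Walk.nil v)
  | @cons u v w p' h hw ih =>
    rcases ih with hpure | ⟨q, r, w1, w2, hpe, hlen⟩
    · rcases h with hE | ⟨rfl, rfl⟩
      · exact Or.inl (Walk.cons hE hpure)
      · refine Or.inr ⟨[u], p', Walk.nil u, hpure, rfl, ?_⟩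
        have h0 : 0 < p'.length := List.length_pos_iff.2 hpure.ne_nil
        simp only [List.length_cons, List.length_nil]
        omega
    · refine Or.inr ⟨u :: q, r, Walk.cons h w1, w2, by rw [hpe]; rfl, ?_⟩
      simp only [List.length_cons]
      omega

theorem dom_ins_aux {E : V → V → Prop} {x y u : V} (h1 : Dom E s u x) :
    ∀ n (w : V) (p : List V), p.length ≤ n → Walk (Ins E x y) s w p →
      Dom E s u w → u ∈ p := by
  intro n
  induction n with
  | zero =>
    intro w p hl hp _
    exact absurd (List.length_eq_zero_iff.1 (Nat.le_zero.1 hl)) hp.ne_nil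
  | succ n ih =>
    intro w p hl hp h2
    rcases walk_ins_split hp with hpure | ⟨q, r, w1, w2, hpe, hlen⟩
    · exact h2 p hpure
    · have hm : u ∈ q := ih x q (by omega) w1 h1
      exact hpe ▸ List.mem_append_left _ hm

theorem dom_ins {E : V → V → Prop} {x y u w : V} (h1 : Dom E s u x)
    (h2 : Dom E s u w) : Dom (Ins E x y) s u w :=
  fun p hp => dom_ins_aux h1 p.length w p le_rfl hp h2

theorem dom_of_ins {E : V → V → Prop} {x y u w : V} (h : Dom (Ins E x y) s u w) :
    Dom E s u w :=
  fun p hp => h p (walk_mono (fun _ _ hab => Or.inl hab) hp)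

theorem reachable_ins {E : V → V → Prop} {x y v : V} (h : Reachable E s v) :
    Reachable (Ins E x y) s v := by
  obtain ⟨p, hp⟩ := h
  exact ⟨p, walk_mono (fun _ _ hab => Or.inl hab) hp⟩

end Aux18

/-- Let `G'` be obtained from `G` by inserting `(x,y)` with `x`, `y`
reachable, `z = nca(x,y)`, and `c` the child of `z` dominating all affected vertices.
Let `δ` induce a low-high order of the derived flow graph `G_z`, and let `δ'` be a
preorder of the new dominator tree whose restriction to the children of `z` is an
augmentation of `δ` (it orders the old children of `z` as `δ` does and inserts every
affected vertex adjacent to `c`, i.e. between the predecessor of `c` and `c` or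
between `c` and the successor of `c`). Then `δ'` is a low-high order in `G'` for every
vertex `v` that was a child of `z` in the old dominator tree. -/
theorem stmt18 (E : V → V → Prop) (s x y z c : V) (δ δ' : V → ℕ)
    (hx : Reachable E s x) (hy : Reachable E s y)
    (hz : IsNca E s z x y)
    (hc : IsIdom E s z c) (hcA : ∀ a, Affected E s x y a → Dom E s c a)
    (hδinj : ∀ u v, IsIdom E s z u → IsIdom E s z v → u ≠ v → δ u ≠ δ v)
    (hδz : ∀ v, IsIdom E s z v →
      (DerivedEdge E s z z v ∨
       ∃ a b, DerivedEdge E s z a v ∧ DerivedEdge E s z b v ∧ a ≠ z ∧ b ≠ z ∧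
         δ a < δ v ∧ δ v < δ b))
    (hδ' : IsPreorderOfD (Ins E x y) s δ')
    (hext : ∀ u v, IsIdom E s z u → IsIdom E s z v → u ≠ v →
      (δ' u < δ' v ↔ δ u < δ v))
    (haug : ∀ a, Affected E s x y a → ∀ u, IsIdom E s z u → u ≠ c →
      ((δ u < δ c → δ' u < δ' a) ∧ (δ c < δ u → δ' a < δ' u))) :
    ∀ v, IsIdom E s z v → LowHighFor (Ins E x y) s δ' v := by
  obtain ⟨hDzx, hDzy, _⟩ := hz
  have reach_z : Reachable E s z := reachable_of_dom_s18 hDzx hx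
  have newchild : ∀ v, IsIdom E s z v → IsIdom (Ins E x y) s z v := by
    intro v hv
    refine ⟨hv.1, dom_ins hDzx hv.2.1, fun u hu hd => ?_⟩
    have h2 : Dom E s u z := hv.2.2 u hu (dom_of_ins hd)
    exact dom_ins (dom_trans h2 hDzx) h2
  have hkey : ∀ g σ, IsIdom E s z g → g ≠ z → Dom E s g σ → Reachable E s σ →
      Dom (Ins E x y) s g σ ∨
      (g = c ∧ ∃ t, t ≠ z ∧ Dom E s z t ∧ IsIdom (Ins E x y) s z t ∧
        Dom (Ins E x y) s t σ ∧ Affected E s x y t) := by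
    intro g σ hig hgz hgσ hreachσ
    have hreachσ' : Reachable (Ins E x y) s σ := reachable_ins hreachσ
    have hσz : σ ≠ z := by
      intro h; subst h
      exact hgz (dom_antisymm reach_z hgσ hig.2.1)
    have hdzσ : Dom E s z σ := dom_trans hig.2.1 hgσ
    obtain ⟨t, hit, htσ'⟩ := child_exists hreachσ' (dom_ins hDzx hdzσ) (Ne.symm hσz)
    have htσ : Dom E s t σ := dom_of_ins htσ'
    have hreacht : Reachable E s t := reachable_of_dom_s18 htσ hreachσ
    by_cases hgt : g = t
    · exact Or.inl (hgt ▸ htσ')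
    · have hts : t ≠ s := by
        intro h; subst h
        have hzs : z ∈ [t] := hit.2.1 [t] (Walk.nil t)
        simp only [List.mem_singleton] at hzs
        exact hit.1 hzs
      obtain ⟨d, hid⟩ := idom_exists hreacht hts
      by_cases hdz : d = z
      · subst hdz
        exfalso
        rcases dom_comparable hreachσ hgσ htσ with h' | h'
        · exact hgz (dom_antisymm reach_z (hid.2.2 g hgt h') hig.2.1)
        · exact hit.1 (dom_antisymm reach_z
            (hig.2.2 t (fun h => hgt h.symm) h') hid.2.1).symm
      · have haff : Affected E s x y t := ⟨d, z, hid, hit, hdz⟩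
        have hct : Dom E s c t := hcA t haff
        have hgc : g = c := by
          have hcσ : Dom E s c σ := dom_trans hct htσ
          rcases dom_comparable hreachσ hgσ hcσ with h' | h'
          · by_cases h'' : g = c
            · exact h''
            · exact absurd (dom_antisymm reach_z (hc.2.2 g h'' h') hig.2.1) hgz
          · by_cases h'' : g = c
            · exact h''
            · exact absurd (dom_antisymm reach_z
                (hig.2.2 c (fun he => h'' he.symm) h') hc.2.1).symm hc.1
        exact Or.inr ⟨hgc, t, Ne.symm hit.1, dom_trans hc.2.1 hct, hit, htσ', haff⟩
  intro v hv
  rcases hδz v hv with hder | ⟨a, b, hda, hdb, haz, hbz, hav, hvb⟩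
  · obtain ⟨_, σ, hEσv, _, hcase⟩ := hder
    rcases hcase with ⟨rfl, _⟩ | ⟨_, hii, _⟩
    · exact Or.inl ⟨σ, newchild v hv, Or.inl hEσv⟩
    · exact absurd rfl hii.1
  · obtain ⟨_, σa, hEa, hnda, hcasea⟩ := hda
    rcases hcasea with ⟨_, hae⟩ | ⟨hσaz, hia, hdaσ⟩
    · exact absurd hae haz
    obtain ⟨_, σb, hEb, hndb, hcaseb⟩ := hdb
    rcases hcaseb with ⟨_, hbe⟩ | ⟨hσbz, hib, hdbσ⟩
    · exact absurd hbe hbz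
    have hnda' := hnda
    simp only [Dom, not_forall] at hnda'
    obtain ⟨pa, hwa, hvpa⟩ := hnda'
    have reach_σa : Reachable E s σa := ⟨pa, hwa⟩
    have hndb' := hndb
    simp only [Dom, not_forall] at hndb'
    obtain ⟨pb, hwb, hvpb⟩ := hndb'
    have reach_σb : Reachable E s σb := ⟨pb, hwb⟩
    have reach_v : Reachable E s v :=
      ⟨pa ++ [σa, v].tail, walk_append hwa (Walk.cons hEa (Walk.nil v))⟩
    have reach_v' : Reachable (Ins E x y) s v := reachable_ins reach_v
    have hav' : a ≠ v := fun h => by rw [h] at hav; exact lt_irrefl _ hav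
    have hvb' : v ≠ b := fun h => by rw [h] at hvb; exact lt_irrefl _ hvb
    obtain ⟨T, hTσ, hTlt, hTnd⟩ :
        ∃ T, Dom (Ins E x y) s T σa ∧ δ' T < δ' v ∧ ¬ Dom E s T v := by
      rcases hkey a σa hia haz hdaσ reach_σa with hd' | ⟨hac, t, htz, hzt, hit, htσ, haff⟩
      · refine ⟨a, hd', (hext a v hia hv hav').2 hav, fun hd => ?_⟩
        exact haz (dom_antisymm reach_z (hv.2.2 a hav' hd) hia.2.1)
      · have hcv : δ c < δ v := by rw [← hac]; exact hav
        have hvc : v ≠ c := fun h => by rw [h] at hcv; exact lt_irrefl _ hcv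
        have hlt : δ' t < δ' v := (haug t haff v hv hvc).2 hcv
        refine ⟨t, htσ, hlt, fun hd => ?_⟩
        have htv : t ≠ v := fun h => by rw [h] at hlt; exact lt_irrefl _ hlt
        exact htz (dom_antisymm reach_z (hv.2.2 t htv hd) hzt)
    have hlt1 : δ' σa < δ' v := by
      by_contra hcon
      push_neg at hcon
      exact hTnd (dom_of_ins (hδ'.2.2 T σa v reach_v' hTσ (le_of_lt hTlt) hcon))
    have hlt2 : δ' v < δ' σb := by
      rcases hkey b σb hib hbz hdbσ reach_σb with hd' | ⟨hbc, t, htz, hzt, hit, htσ, haff⟩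
      · exact lt_of_lt_of_le ((hext v b hv hib hvb').2 hvb)
          (hδ'.2.1 b σb (reachable_ins reach_σb) hd')
      · have hvc' : δ v < δ c := by rw [← hbc]; exact hvb
        have hvc : v ≠ c := fun h => by rw [h] at hvc'; exact lt_irrefl _ hvc'
        exact lt_of_lt_of_le ((haug t haff v hv hvc).1 hvc')
          (hδ'.2.1 t σb (reachable_ins reach_σb) htσ)
    exact Or.inr ⟨σa, σb, Or.inl hEa, Or.inl hEb, reachable_ins reach_σa,
      reachable_ins reach_σb, hlt1, hlt2, fun hd => hndb (dom_of_ins hd)⟩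

end Dominators
end
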